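/- arXiv:2507.11696 — 3 statements merged into one kernel-verified Lean document; each statement's English description precedes it below -/
import Mathlib

section
/- For every integer k and every real δ with 0 ≤ δ < π/N, the spectrum (set of eigenvalues in ℂ) of the Harper matrix h(a, (2k+1)π/N + δ, ε) equals the spectrum of h(a, π/N − δ, ε), for all real a, ε. -/
/-! Conjugating by the unitary clock matrix multiplies `X` by `ω` and `Xᴴ` by `ω⁻¹`, so
`Z h(a,b,ε) Zᴴ = h(a, b + 2π/N, ε)` and the spectrum is `2π/N`-periodic in `b`. Transposition
swaps `X` and `Xᴴ` and fixes `Z`, so `h(a,-b,ε) = h(a,b,ε)ᵀ` has the same spectrum. Since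
`(2k+1)π/N + δ = -(π/N - δ) + (k+1)·2π/N`, the two spectra agree. -/

open Matrix Complex

/-- The primitive `N`-th root of unity `ω = exp(2πi/N)`. -/
noncomputable def omegaN (N : ℕ) : ℂ := Complex.exp (2 * (Real.pi : ℂ) * Complex.I / (N : ℂ))

/-- The clock matrix `Z` with `Z_{jk} = ω^j` if `j = k`, `0` otherwise. -/
noncomputable def clockZ (N : ℕ) : Matrix (Fin N) (Fin N) ℂ :=
  Matrix.diagonal fun j => omegaN N ^ (j : ℕ)

/-- The shift matrix `X` with `X_{jk} = 1` if `j = k + 1 (mod N)`, `0` otherwise. -/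
def shiftX (N : ℕ) : Matrix (Fin N) (Fin N) ℂ :=
  Matrix.of fun j k => if (j : ℕ) = ((k : ℕ) + 1) % N then 1 else 0

/-- The shifted Harper matrix
`h(a,b,ε) = (a/2)·e^{ib}·X + (a/2)·e^{−ib}·Xᴴ + (ε/2)·(Z + Zᴴ)`. -/
noncomputable def harper (N : ℕ) (a b ε : ℝ) : Matrix (Fin N) (Fin N) ℂ :=
  ((a : ℂ) / 2 * Complex.exp ((b : ℂ) * Complex.I)) • shiftX N
  + ((a : ℂ) / 2 * Complex.exp (-(b : ℂ) * Complex.I)) • (shiftX N)ᴴ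
  + ((ε : ℂ) / 2) • (clockZ N + (clockZ N)ᴴ)

/-- The parity matrix `P` with `P_{jk} = 1` if `j + k ≡ 0 (mod N)`, `0` otherwise. -/
def parityP (N : ℕ) : Matrix (Fin N) (Fin N) ℂ :=
  Matrix.of fun j k => if ((j : ℕ) + (k : ℕ)) % N = 0 then 1 else 0

/-- The discrete Fourier transform matrix `Q` with `Q_{jk} = ω^{jk}/√N`. -/
noncomputable def dftQ (N : ℕ) : Matrix (Fin N) (Fin N) ℂ :=
  Matrix.of fun j k => omegaN N ^ ((j : ℕ) * (k : ℕ)) / (Real.sqrt N : ℂ)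

theorem spectrum_unitary_conjugate {R A : Type*} [CommSemiring R] [Ring A] [StarMul A]
    [Algebra R A] {U : A} (hU : U ∈ unitary A) (a : A) :
    spectrum R (U * a * star U) = spectrum R a :=
  spectrum.units_conjugate (u := Unitary.toUnits ⟨U, hU⟩)

namespace Matrix

variable {n : Type*} [Fintype n] [DecidableEq n]

theorem spectrum_transpose {R : Type*} [CommRing R] (A : Matrix n n R) :
    spectrum R Aᵀ = spectrum R A := by
  ext μ
  rw [spectrum.mem_iff, spectrum.mem_iff, ← isUnit_transpose, transpose_sub,
    algebraMap_eq_diagonal, diagonal_transpose, transpose_transpose]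

theorem diagonal_mem_unitary {α : Type*} [Semiring α] [StarRing α] {d : n → α}
    (hd : ∀ i, d i ∈ unitary α) : diagonal d ∈ unitary (Matrix n n α) := by
  rw [Unitary.mem_iff, star_eq_conjTranspose, diagonal_conjTranspose, diagonal_mul_diagonal,
    diagonal_mul_diagonal, ← diagonal_one]
  exact ⟨congrArg diagonal (funext fun i => Unitary.star_mul_self_of_mem (hd i)),
    congrArg diagonal (funext fun i => Unitary.mul_star_self_of_mem (hd i))⟩

end Matrix

theorem omegaN_ne_zero (N : ℕ) : omegaN N ≠ 0 := Complex.exp_ne_zero _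

theorem star_omegaN (N : ℕ) : star (omegaN N) = (omegaN N)⁻¹ := by
  rw [omegaN, ← Complex.exp_neg, Complex.star_def, ← Complex.exp_conj]
  congr 1
  simp only [map_div₀, map_mul, map_ofNat, conj_ofReal, conj_I, map_natCast]
  ring

theorem omegaN_pow_self (N : ℕ) : omegaN N ^ N = 1 := by
  rcases eq_or_ne N 0 with rfl | hN
  · exact pow_zero _
  · exact (isPrimitiveRoot_exp N hN).pow_eq_one

theorem omegaN_pow_mod (N m : ℕ) : omegaN N ^ (m % N) = omegaN N ^ m := by
  conv_rhs => rw [← Nat.mod_add_div m N, pow_add, pow_mul, omegaN_pow_self, one_pow, mul_one]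

theorem omegaN_mem_unitary (N : ℕ) : omegaN N ∈ unitary ℂ := by
  rw [Unitary.mem_iff_self_mul_star, star_omegaN, mul_inv_cancel₀ (omegaN_ne_zero N)]

theorem clockZ_mem_unitary (N : ℕ) : clockZ N ∈ unitary (Matrix (Fin N) (Fin N) ℂ) :=
  diagonal_mem_unitary fun _ => pow_mem (omegaN_mem_unitary N) _

theorem clockZ_mul_shiftX_mul_conjTranspose (N : ℕ) :
    clockZ N * shiftX N * (clockZ N)ᴴ = omegaN N • shiftX N := by
  ext j k
  simp only [clockZ, diagonal_conjTranspose, mul_diagonal, diagonal_mul, shiftX, of_apply,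
    Matrix.smul_apply, smul_eq_mul, mul_ite, mul_one, mul_zero, ite_mul, zero_mul, Pi.star_apply]
  split_ifs with hjk
  · rw [hjk, omegaN_pow_mod, star_pow, star_omegaN, pow_succ, inv_pow, mul_right_comm,
      mul_inv_cancel₀ (pow_ne_zero _ (omegaN_ne_zero N)), one_mul]
  · rfl

theorem harper_add_two_pi_div (N : ℕ) (a b ε : ℝ) :
    harper N a (b + 2 * Real.pi / N) ε = clockZ N * harper N a b ε * (clockZ N)ᴴ := by
  have hZ : clockZ N * (clockZ N)ᴴ = 1 := Unitary.mul_star_self_of_mem (clockZ_mem_unitary N)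
  have hX : clockZ N * (shiftX N)ᴴ * (clockZ N)ᴴ = star (omegaN N) • (shiftX N)ᴴ := by
    simpa [conjTranspose_mul, mul_assoc] using
      congrArg conjTranspose (clockZ_mul_shiftX_mul_conjTranspose N)
  have hphase : Complex.exp (((b + 2 * Real.pi / N : ℝ) : ℂ) * I)
      = Complex.exp ((b : ℂ) * I) * omegaN N := by
    rw [omegaN, ← Complex.exp_add]
    push_cast
    ring_nf
  have hphase' : Complex.exp (-((b + 2 * Real.pi / N : ℝ) : ℂ) * I)
      = Complex.exp (-(b : ℂ) * I) * star (omegaN N) := by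
    rw [star_omegaN, omegaN, ← Complex.exp_neg, ← Complex.exp_add]
    push_cast
    ring_nf
  simp only [harper, hphase, hphase', Matrix.mul_add, Matrix.add_mul, Matrix.mul_smul,
    Matrix.smul_mul, clockZ_mul_shiftX_mul_conjTranspose, hX]
  simp only [smul_smul, mul_assoc, hZ, mul_one, one_mul]

theorem harper_neg (N : ℕ) (a b ε : ℝ) : harper N a (-b) ε = (harper N a b ε)ᵀ := by
  have hX : (shiftX N)ᵀ = (shiftX N)ᴴ := by
    ext j k
    simp [shiftX, apply_ite star]
  have hX' : ((shiftX N)ᴴ)ᵀ = shiftX N := by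
    rw [← hX, transpose_transpose]
  have hZ : (clockZ N)ᵀ = clockZ N := diagonal_transpose _
  have hZ' : ((clockZ N)ᴴ)ᵀ = (clockZ N)ᴴ := by
    rw [clockZ, diagonal_conjTranspose, diagonal_transpose]
  simp only [harper, transpose_add, transpose_smul, hX, hX', hZ, hZ', ofReal_neg, neg_neg]
  abel

theorem spectrum_harper_periodic (N : ℕ) (a ε : ℝ) :
    Function.Periodic (fun b => spectrum ℂ (harper N a b ε)) (2 * Real.pi / N) := fun b => by
  dsimp only
  rw [harper_add_two_pi_div, ← star_eq_conjTranspose,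
    spectrum_unitary_conjugate (clockZ_mem_unitary N)]

theorem harper_spectrum_reflect_general (N : ℕ) (k : ℤ) (δ : ℝ) (a ε : ℝ) :
    spectrum ℂ (harper N a ((2 * (k : ℝ) + 1) * Real.pi / N + δ) ε)
      = spectrum ℂ (harper N a (Real.pi / N - δ) ε) := by
  have hb : (2 * (k : ℝ) + 1) * Real.pi / N + δ
      = -(Real.pi / N - δ) + ((k + 1 : ℤ) : ℝ) * (2 * Real.pi / N) := by
    push_cast
    ring
  calc spectrum ℂ (harper N a ((2 * (k : ℝ) + 1) * Real.pi / N + δ) ε)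
      = spectrum ℂ (harper N a (-(Real.pi / N - δ)) ε) := by
        rw [hb]
        exact (spectrum_harper_periodic N a ε).int_mul (k + 1) _
    _ = spectrum ℂ (harper N a (Real.pi / N - δ) ε) := by
        rw [harper_neg, spectrum_transpose]

/-- The spectrum of `h(a, (2k+1)π/N + δ, ε)` equals the spectrum of `h(a, π/N − δ, ε)`. -/
theorem harper_spectrum_reflect (N : ℕ) (hN : 2 ≤ N) (k : ℤ) (δ : ℝ)
    (hδ0 : 0 ≤ δ) (hδ1 : δ < Real.pi / N) (a ε : ℝ) :
    spectrum ℂ (harper N a ((2 * (k : ℝ) + 1) * Real.pi / N + δ) ε)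
      = spectrum ℂ (harper N a (Real.pi / N - δ) ε) :=
  harper_spectrum_reflect_general N k δ a ε
end

section
/- For all real a and ε, conjugation by the discrete Fourier transform matrix exchanges the kinetic and potential coefficients of the Harper matrix at b = 0: Q · h(a, 0, ε) · Qᴴ = h(ε, 0, a); consequently the spectrum (set of eigenvalues in ℂ) of h(a, 0, ε) equals the spectrum of h(ε, 0, a). -/
open Matrix Complex

/-! The DFT intertwines translation with multiplication by characters: `Q X = Z Q` and
`Q Z = Xᴴ Q`. As `Q` is unitary, `M ↦ Q M Qᴴ` is a ⋆-algebra automorphism of the matrix algebra,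
so it sends `X + Xᴴ ↦ Z + Zᴴ` and `Z + Zᴴ ↦ Xᴴ + X`, which swaps the two coefficients of
`h(a, 0, ε)`; unitary conjugation preserves the spectrum. -/

section
variable {N : ℕ} [NeZero N]

theorem isPrimitiveRoot_omegaN : IsPrimitiveRoot (omegaN N) N :=
  Complex.isPrimitiveRoot_exp N (NeZero.ne N)

theorem omegaN_pow_mul_mod (j m : ℕ) : omegaN N ^ (j * (m % N)) = omegaN N ^ (j * m) := by
  have h : (omegaN N ^ j) ^ N = 1 := by
    rw [pow_right_comm, isPrimitiveRoot_omegaN.pow_eq_one, one_pow]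
  rw [pow_mul, pow_mul, ← pow_eq_pow_mod _ h]

theorem conj_omegaN : starRingEnd ℂ (omegaN N) = (omegaN N)⁻¹ :=
  (inv_eq_conj (isPrimitiveRoot_omegaN.norm'_eq_one (NeZero.ne N))).symm

theorem sum_omegaN_pow_mul_conj (j l : Fin N) :
    ∑ k : Fin N, omegaN N ^ ((j : ℕ) * k) * starRingEnd ℂ (omegaN N ^ ((l : ℕ) * k))
      = if j = l then (N : ℂ) else 0 := by
  have hω := isPrimitiveRoot_omegaN (N := N)
  have hω₀ : omegaN N ≠ 0 := hω.ne_zero (NeZero.ne N)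
  set x := omegaN N ^ (j : ℕ) * (omegaN N ^ (l : ℕ))⁻¹ with hx
  have hterm (k : ℕ) :
      omegaN N ^ ((j : ℕ) * k) * starRingEnd ℂ (omegaN N ^ ((l : ℕ) * k)) = x ^ k := by
    rw [map_pow, conj_omegaN, pow_mul, pow_mul, inv_pow, ← mul_pow]
  simp only [hterm]
  rw [Fin.sum_univ_eq_sum_range (x ^ ·)]
  split_ifs with hjl
  · simp [hx, hjl, hω₀]
  · have hx1 : x ≠ 1 := fun h1 => hjl <| Fin.ext <| hω.pow_inj j.isLt l.isLt <| by
      rwa [hx, mul_inv_eq_one₀ (pow_ne_zero _ hω₀)] at h1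
    have hxN : x ^ N = 1 := by
      rw [hx, mul_pow, inv_pow, pow_right_comm, pow_right_comm _ (l : ℕ), hω.pow_eq_one,
        one_pow, one_pow, inv_one, mul_one]
    rw [geom_sum_eq hx1, hxN, sub_self, zero_div]

theorem dftQ_mul_conjTranspose : dftQ N * (dftQ N)ᴴ = 1 := by
  ext j l
  have hterm (k : Fin N) : dftQ N j k * (dftQ N)ᴴ k l
      = omegaN N ^ ((j : ℕ) * k) * starRingEnd ℂ (omegaN N ^ ((l : ℕ) * k)) / N := by
    simp only [dftQ, conjTranspose_apply, of_apply, star_def, map_div₀, conj_ofReal]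
    rw [div_mul_div_comm, ← ofReal_mul, Real.mul_self_sqrt (Nat.cast_nonneg _), ofReal_natCast]
  rw [mul_apply, Finset.sum_congr rfl fun k _ => hterm k, ← Finset.sum_div,
    sum_omegaN_pow_mul_conj, one_apply]
  split_ifs <;> simp [NeZero.ne N]

theorem dftQ_mem_unitaryGroup : dftQ N ∈ unitaryGroup (Fin N) ℂ :=
  mem_unitaryGroup_iff.2 dftQ_mul_conjTranspose

theorem shiftX_apply (j k : Fin N) : shiftX N j k = if j = k + 1 then 1 else 0 := by
  simp only [shiftX, of_apply, Fin.ext_iff, Fin.val_add, Fin.val_one', Nat.add_mod_mod]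

theorem conjTranspose_shiftX_apply (j k : Fin N) :
    (shiftX N)ᴴ j k = if k = j + 1 then 1 else 0 := by
  simp [conjTranspose_apply, shiftX_apply, apply_ite]

theorem dftQ_mul_shiftX : dftQ N * shiftX N = clockZ N * dftQ N := by
  ext j k
  rw [clockZ, diagonal_mul, mul_apply]
  simp only [shiftX_apply, mul_ite, mul_one, mul_zero, Finset.sum_ite_eq',
    Finset.mem_univ, if_true, dftQ, of_apply, Fin.val_add, Fin.val_one',
    Nat.add_mod_mod, omegaN_pow_mul_mod]
  rw [mul_div_assoc', ← pow_add, mul_add_one, add_comm]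

theorem dftQ_mul_clockZ : dftQ N * clockZ N = (shiftX N)ᴴ * dftQ N := by
  ext j k
  rw [clockZ, mul_diagonal, mul_apply]
  simp only [conjTranspose_shiftX_apply, ite_mul, one_mul, zero_mul, Finset.sum_ite_eq',
    Finset.mem_univ, if_true, dftQ, of_apply, Fin.val_add, Fin.val_one',
    Nat.add_mod_mod]
  rw [mul_comm (((j : ℕ) + 1) % N), omegaN_pow_mul_mod, div_mul_eq_mul_div, ← pow_add, mul_add_one,
    mul_comm (k : ℕ)]

theorem dftQ_conj_shiftX : dftQ N * shiftX N * (dftQ N)ᴴ = clockZ N := by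
  rw [dftQ_mul_shiftX, mul_assoc, dftQ_mul_conjTranspose, mul_one]

theorem dftQ_conj_clockZ : dftQ N * clockZ N * (dftQ N)ᴴ = (shiftX N)ᴴ := by
  rw [dftQ_mul_clockZ, mul_assoc, dftQ_mul_conjTranspose, mul_one]

end

theorem harper_zero (N : ℕ) (a ε : ℝ) : harper N a 0 ε
    = (a / 2 : ℂ) • (shiftX N + (shiftX N)ᴴ) + (ε / 2 : ℂ) • (clockZ N + (clockZ N)ᴴ) := by
  simp [harper, smul_add]

theorem dft_conj_harper_general (N : ℕ) (a ε : ℝ) :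
    dftQ N * harper N a 0 ε * (dftQ N)ᴴ = harper N ε 0 a
      ∧ spectrum ℂ (harper N a 0 ε) = spectrum ℂ (harper N ε 0 a) := by
  rcases eq_or_ne N 0 with rfl | hN
  · exact ⟨Subsingleton.elim _ _, congrArg _ (Subsingleton.elim _ _)⟩
  have : NeZero N := ⟨hN⟩
  let Q : unitaryGroup (Fin N) ℂ := ⟨dftQ N, dftQ_mem_unitaryGroup⟩
  let Φ := Unitary.conjStarAlgAut ℂ _ Q
  have hX : Φ (shiftX N) = clockZ N := dftQ_conj_shiftX
  have hZ : Φ (clockZ N) = star (shiftX N) := dftQ_conj_clockZ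
  have hconj : dftQ N * harper N a 0 ε * (dftQ N)ᴴ = harper N ε 0 a := by
    change Φ (harper N a 0 ε) = _
    simp only [harper_zero, ← star_eq_conjTranspose, map_add, map_smul, map_star, hX, hZ, star_star]
    rw [add_comm (star (shiftX N)), add_comm]
  refine ⟨hconj, ?_⟩
  rw [← hconj]
  exact (Unitary.spectrum_star_right_conjugate (R := ℂ) (U := Q)).symm

/-- Conjugation by the discrete Fourier transform matrix exchanges the kinetic and
potential coefficients of the Harper matrix at `b = 0`, and hence the spectra of
`h(a, 0, ε)` and `h(ε, 0, a)` agree. -/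
theorem dft_conj_harper (N : ℕ) (hN : 2 ≤ N) (a ε : ℝ) :
    dftQ N * harper N a 0 ε * (dftQ N)ᴴ = harper N ε 0 a
      ∧ spectrum ℂ (harper N a 0 ε) = spectrum ℂ (harper N ε 0 a) :=
  dft_conj_harper_general N a ε
end

section
/- Let k be an integer, let a, ε be real, and let v be a unit eigenvector of the Harper matrix h(a, kπ/N, ε) whose eigenvalue λ is simple (its eigenspace is one-dimensional). Then the Hellmann–Feynman expectation value of the b-derivative of the Harper matrix vanishes: the inner product ⟨v, D·v⟩ = 0, where D = (a/(2i))·(exp(−ikπ/N)·Xᴴ − exp(ikπ/N)·X) is the derivative of h(a, b, ε) with respect to b evaluated at b = kπ/N. -/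
open Matrix Complex

/-!
At `b = kπ/N` the phase `φ = e^{2ib}` is an `N`-th root of unity, so `U = diag(φ^j)` is unitary
with `U X = φ X U`. Hence `v ↦ U v̄` is an antiunitary symmetry of the Harper matrix,
`h U = U hᵀ`, while the `b`-derivative changes sign, `D U = -U Dᵀ`. If `v` spans the eigenspace
of the (real) eigenvalue `λ`, then `U v̄ = c v`, and `⟨v, D v⟩` equals both `|c|² ⟨v, D v⟩` and
`-⟨v, D v⟩`, so it vanishes.
-/

namespace Matrix

open scoped ComplexOrder

variable {𝕜 n : Type*} [RCLike 𝕜] [Fintype n]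

theorem IsHermitian.star_eq_of_mulVec_eq_smul {H : Matrix n n 𝕜} (hH : H.IsHermitian)
    {v : n → 𝕜} (hv : v ≠ 0) {μ : 𝕜} (h : H *ᵥ v = μ • v) : star μ = μ := by
  have hself : star (star v ⬝ᵥ (H *ᵥ v)) = star v ⬝ᵥ (H *ᵥ v) := by
    rw [← star_dotProduct, star_mulVec, hH.eq, ← dotProduct_mulVec]
  have hnorm : star v ⬝ᵥ v ≠ 0 := dotProduct_star_self_eq_zero.not.mpr hv
  rw [h, dotProduct_smul, smul_eq_mul, star_mul', ← star_dotProduct] at hself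
  exact mul_right_cancel₀ hnorm hself

theorem IsHermitian.mulVec_mulVec_star_eq_smul {H U : Matrix n n 𝕜} (hH : H.IsHermitian)
    (hHU : H * U = U * Hᵀ) {v : n → 𝕜} {μ : 𝕜} (h : H *ᵥ v = μ • v) (hμ : star μ = μ) :
    H *ᵥ (U *ᵥ star v) = μ • (U *ᵥ star v) := by
  have hstar : Hᵀ *ᵥ star v = μ • star v := by
    rw [mulVec_transpose, ← hH.eq, ← star_mulVec, h, star_smul, hμ]
  rw [mulVec_mulVec, hHU, ← mulVec_mulVec, hstar, mulVec_smul]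

theorem star_mulVec_star_dotProduct_mulVec [DecidableEq n] {D U : Matrix n n 𝕜}
    (hU : Uᴴ * U = 1) (hDU : D * U = -(U * Dᵀ)) (v : n → 𝕜) :
    star (U *ᵥ star v) ⬝ᵥ (D *ᵥ (U *ᵥ star v)) = -(star v ⬝ᵥ (D *ᵥ v)) := by
  rw [star_mulVec, star_star, mulVec_mulVec, hDU, neg_mulVec, dotProduct_neg,
    ← mulVec_mulVec, dotProduct_mulVec, vecMul_vecMul, hU, vecMul_one, mulVec_transpose,
    dotProduct_comm, ← dotProduct_mulVec]

theorem IsHermitian.dotProduct_mulVec_eq_zero_of_forall_eigenvector_eq_smul [DecidableEq n]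
    {H D U : Matrix n n 𝕜} (hH : H.IsHermitian) (hU : Uᴴ * U = 1) (hHU : H * U = U * Hᵀ)
    (hDU : D * U = -(U * Dᵀ)) {v : n → 𝕜} {μ : 𝕜} (h : H *ᵥ v = μ • v)
    (hsimple : ∀ w, H *ᵥ w = μ • w → ∃ c : 𝕜, w = c • v) :
    star v ⬝ᵥ (D *ᵥ v) = 0 := by
  rcases eq_or_ne v 0 with rfl | hv
  · simp
  obtain ⟨c, hc⟩ :=
    hsimple _ (hH.mulVec_mulVec_star_eq_smul hHU h (hH.star_eq_of_mulVec_eq_smul hv h))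
  have hflip := star_mulVec_star_dotProduct_mulVec hU hDU v
  rw [hc, star_smul, mulVec_smul, smul_dotProduct, dotProduct_smul, smul_eq_mul, smul_eq_mul,
    ← mul_assoc, ← sub_eq_zero, sub_neg_eq_add, ← add_one_mul] at hflip
  have hpos : star c * c + 1 ≠ 0 :=
    (add_pos_of_nonneg_of_pos (star_mul_self_nonneg c) one_pos).ne'
  exact (mul_eq_zero.mp hflip).resolve_left hpos

end Matrix

theorem smul_add_smul_transpose_mul_eq {R n : Type*} [CommRing R] [Fintype n]
    {X U : Matrix n n R} {φ s α β : R} (hU : Uᵀ = U)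
    (hUX : U * X = φ • (X * U)) (hs : s * s = 1) (hα : α = s * φ * β) :
    (α • X + β • Xᵀ) * U = s • (U * (α • X + β • Xᵀ)ᵀ) := by
  have hXU : Xᵀ * U = φ • (U * Xᵀ) := by
    rw [← transpose_transpose (Xᵀ * U), transpose_mul, transpose_transpose, hU, hUX,
      transpose_smul, transpose_mul, hU]
  rw [transpose_add, transpose_smul, transpose_smul, transpose_transpose, add_mul, mul_add,
    Matrix.smul_mul, Matrix.smul_mul, Matrix.mul_smul, Matrix.mul_smul, hXU, hUX, hα]
  match_scalars
  · ring
  · linear_combination -(φ * β) * hs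

theorem shiftX_conjTranspose (N : ℕ) : (shiftX N)ᴴ = (shiftX N)ᵀ := by
  ext j k
  simp only [conjTranspose_apply, transpose_apply, shiftX, of_apply]
  split_ifs <;> simp

theorem diagonal_pow_mul_shiftX {N : ℕ} {φ : ℂ} (hφ : φ ^ N = 1) :
    diagonal (fun j : Fin N => φ ^ (j : ℕ)) * shiftX N
      = φ • (shiftX N * diagonal fun j : Fin N => φ ^ (j : ℕ)) := by
  ext j k
  simp only [diagonal_mul, mul_diagonal, Matrix.smul_apply, shiftX, of_apply, smul_eq_mul]
  split_ifs with h
  · rw [h, ← pow_eq_pow_mod _ hφ, pow_succ]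
    ring
  · simp

theorem conjTranspose_diagonal_pow_mul_self {R n : Type*} [CommSemiring R] [StarRing R]
    [Fintype n] [DecidableEq n] {φ : R} (hφ : star φ * φ = 1) (e : n → ℕ) :
    (diagonal fun j => φ ^ e j)ᴴ * diagonal (fun j => φ ^ e j) = 1 := by
  simp only [diagonal_conjTranspose, diagonal_mul_diagonal, Pi.star_apply, star_pow, ← mul_pow,
    hφ, one_pow, diagonal_one]

theorem star_exp_ofReal_mul_I (b : ℝ) : star (exp (b * I)) = exp (-b * I) := by
  rw [star_def, ← exp_conj, map_mul, conj_ofReal, conj_I, mul_neg, neg_mul]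

theorem harper_isHermitian (N : ℕ) (a b ε : ℝ) : (harper N a b ε).IsHermitian := by
  have hsplit : harper N a b ε = ((a : ℂ) / 2 * exp (b * I)) • shiftX N
      + (((a : ℂ) / 2 * exp (b * I)) • shiftX N)ᴴ + ((ε : ℂ) / 2) • (clockZ N + (clockZ N)ᴴ) := by
    simp only [harper, conjTranspose_smul, star_mul', star_exp_ofReal_mul_I, star_div₀,
      star_ofNat, Complex.star_def, conj_ofReal]
  rw [hsplit]
  refine (isHermitian_add_transpose_self _).add ((isHermitian_add_transpose_self _).smul ?_)
  exact conj_eq_iff_real.mpr ⟨ε / 2, by push_cast; rfl⟩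

theorem harper_mul_diagonal_pow {N : ℕ} {φ : ℂ} (hφ : φ ^ N = 1) (a b ε : ℝ)
    (hb : exp (b * I) = φ * exp (-b * I)) :
    harper N a b ε * diagonal (fun j : Fin N => φ ^ (j : ℕ))
      = diagonal (fun j : Fin N => φ ^ (j : ℕ)) * (harper N a b ε)ᵀ := by
  have hkinetic := smul_add_smul_transpose_mul_eq (diagonal_transpose _)
    (diagonal_pow_mul_shiftX hφ) (one_mul 1)
    (show (a : ℂ) / 2 * exp (b * I) = 1 * φ * ((a : ℂ) / 2 * exp (-b * I)) by
      rw [hb]; ring)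
  have hpotential :
      ((ε : ℂ) / 2) • (clockZ N + (clockZ N)ᴴ) * diagonal (fun j : Fin N => φ ^ (j : ℕ))
      = diagonal (fun j : Fin N => φ ^ (j : ℕ)) * (((ε : ℂ) / 2) • (clockZ N + (clockZ N)ᴴ))ᵀ := by
    rw [clockZ, diagonal_conjTranspose, diagonal_add, ← diagonal_smul, diagonal_transpose,
      diagonal_mul_diagonal, diagonal_mul_diagonal]
    simp only [mul_comm]
  rw [one_smul] at hkinetic
  rw [harper, shiftX_conjTranspose, add_mul, hkinetic, hpotential, ← mul_add, ← transpose_add]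

noncomputable def harperDeriv (N : ℕ) (a b : ℝ) : Matrix (Fin N) (Fin N) ℂ :=
  ((a : ℂ) / (2 * I)) • (exp (-(b : ℂ) * I) • (shiftX N)ᴴ - exp ((b : ℂ) * I) • shiftX N)

theorem harperDeriv_mul_diagonal_pow {N : ℕ} {φ : ℂ} (hφ : φ ^ N = 1) (a b : ℝ)
    (hb : exp (b * I) = φ * exp (-b * I)) :
    harperDeriv N a b * diagonal (fun j : Fin N => φ ^ (j : ℕ))
      = -(diagonal (fun j : Fin N => φ ^ (j : ℕ)) * (harperDeriv N a b)ᵀ) := by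
  have hkinetic := smul_add_smul_transpose_mul_eq (diagonal_transpose _)
    (diagonal_pow_mul_shiftX hφ) (by ring)
    (show -exp (b * I) = -1 * φ * exp (-b * I) by rw [hb]; ring)
  have hD : harperDeriv N a b
      = ((a : ℂ) / (2 * I)) • ((-exp (b * I)) • shiftX N + exp (-b * I) • (shiftX N)ᵀ) := by
    rw [harperDeriv, shiftX_conjTranspose, neg_smul, neg_add_eq_sub]
  rw [hD, Matrix.smul_mul, hkinetic, transpose_smul, Matrix.mul_smul, neg_one_smul, smul_neg]

theorem exp_two_mul_int_mul_pi_div_mul_I_pow_eq_one (N : ℕ) (k : ℤ) :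
    exp (((2 * (k * Real.pi / N) : ℝ) : ℂ) * I) ^ N = 1 := by
  obtain rfl | hN := eq_or_ne N 0
  · exact pow_zero _
  rw [← exp_nat_mul, ← exp_int_mul_two_pi_mul_I k]
  congr 1
  push_cast
  field_simp

theorem harper_hellmann_feynman_general (N : ℕ) (k : ℤ) (a ε : ℝ)
    (v : Fin N → ℂ) (lam : ℂ)
    (heig : (harper N a ((k : ℝ) * Real.pi / N) ε).mulVec v = lam • v)
    (hsimple : ∀ w : Fin N → ℂ,
      (harper N a ((k : ℝ) * Real.pi / N) ε).mulVec w = lam • w → ∃ c : ℂ, w = c • v) :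
    dotProduct (star v)
      (((((a : ℂ) / (2 * Complex.I)) •
          (Complex.exp (-(((k : ℝ) * Real.pi / N : ℝ) : ℂ) * Complex.I) • (shiftX N)ᴴ
            - Complex.exp ((((k : ℝ) * Real.pi / N : ℝ) : ℂ) * Complex.I) • shiftX N))).mulVec v)
      = 0 := by
  set b : ℝ := k * Real.pi / N
  change star v ⬝ᵥ (harperDeriv N a b *ᵥ v) = 0
  set φ : ℂ := exp (((2 * b : ℝ) : ℂ) * I) with hφ_def
  have hφ : φ ^ N = 1 := exp_two_mul_int_mul_pi_div_mul_I_pow_eq_one N k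
  have hb : exp (b * I) = φ * exp (-b * I) := by
    rw [hφ_def, ← exp_add]
    push_cast
    ring_nf
  have hunitary : star φ * φ = 1 := by
    rw [hφ_def, star_exp_ofReal_mul_I, ← exp_add, neg_mul, neg_add_cancel, exp_zero]
  exact (harper_isHermitian N a b ε).dotProduct_mulVec_eq_zero_of_forall_eigenvector_eq_smul
    (conjTranspose_diagonal_pow_mul_self hunitary _) (harper_mul_diagonal_pow hφ a b ε hb)
    (harperDeriv_mul_diagonal_pow hφ a b hb) heig hsimple

/-- Hellmann–Feynman: for a unit eigenvector `v` of `h(a, kπ/N, ε)` with simple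
eigenvalue `λ`, the expectation value `⟨v, D·v⟩` of the `b`-derivative
`D = (a/(2i))·(e^{−ikπ/N}·Xᴴ − e^{ikπ/N}·X)` of the Harper matrix vanishes. -/
theorem harper_hellmann_feynman (N : ℕ) (hN : 2 ≤ N) (k : ℤ) (a ε : ℝ)
    (v : Fin N → ℂ) (lam : ℂ)
    (hunit : dotProduct (star v) v = 1)
    (heig : (harper N a ((k : ℝ) * Real.pi / N) ε).mulVec v = lam • v)
    (hsimple : ∀ w : Fin N → ℂ,
      (harper N a ((k : ℝ) * Real.pi / N) ε).mulVec w = lam • w → ∃ c : ℂ, w = c • v) :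
    dotProduct (star v)
      (((((a : ℂ) / (2 * Complex.I)) •
          (Complex.exp (-(((k : ℝ) * Real.pi / N : ℝ) : ℂ) * Complex.I) • (shiftX N)ᴴ
            - Complex.exp ((((k : ℝ) * Real.pi / N : ℝ) : ℂ) * Complex.I) • shiftX N))).mulVec v)
      = 0 :=
  harper_hellmann_feynman_general N k a ε v lam heig hsimple
end
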